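/- Let M be a hypersurface of Sol^4_0 whose unit normal field at every point has the form N = a E_1 + b E_2 + c E_3 + d E_4 with smooth functions a,b,c,d, a²+b²+c²+d² = 1, and suppose M is a Codazzi hypersurface (the ambient curvature satisfies g(R̃(X,Y)Z, N) = 0 for all tangent X,Y,Z). Then (a²+b²)(c²+d²) = 0 at every point; i.e., the normal lies entirely in span{E_1,E_2} or entirely in span{E_3,E_4}. -/

import Mathlib

noncomputable section

abbrev Pt := Fin 4 → ℝ
abbrev Vec := Fin 4 → ℝ
abbrev VF := Pt → Vec

/-- Diagonal coefficients of the metric g = e^{-2t}(dx²+dy²)+e^{4t}dz²+dt². -/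
def Gc (i : Fin 4) (p : Pt) : ℝ :=
  if i = 0 ∨ i = 1 then Real.exp (-2 * p 3)
  else if i = 2 then Real.exp (4 * p 3) else 1

/-- The Riemannian metric of Sol⁴₀ at a point, as a bilinear form on tangent vectors. -/
def gSol (p : Pt) (v w : Vec) : ℝ := ∑ i, Gc i p * v i * w i

def cvec (i : Fin 4) : Vec := fun j => if j = i then 1 else 0

/-- Partial derivative in the i-th coordinate direction. -/
def pd (i : Fin 4) (f : Pt → ℝ) (p : Pt) : ℝ := fderiv ℝ f p (cvec i)

/-- Christoffel symbols of the (diagonal) metric gSol. -/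
def Chr (k i j : Fin 4) (p : Pt) : ℝ :=
  (1 / (2 * Gc k p)) *
    ((if j = k then pd i (Gc k) p else 0) +
     (if i = k then pd j (Gc k) p else 0) -
     (if i = j then pd k (Gc i) p else 0))

/-- Levi-Civita covariant derivative ∇̃_X Y of the metric gSol. -/
def nabla (X Y : VF) : VF := fun p k =>
  fderiv ℝ (fun q => Y q k) p (X p) + ∑ i, ∑ j, Chr k i j p * X p i * Y p j

/-- Lie bracket of vector fields. -/
def bracket (X Y : VF) : VF := fun p k =>
  fderiv ℝ (fun q => Y q k) p (X p) - fderiv ℝ (fun q => X q k) p (Y p)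

/-- Riemann curvature tensor R(X,Y)Z = ∇_X∇_Y Z − ∇_Y∇_X Z − ∇_{[X,Y]}Z. -/
def Riem (X Y Z : VF) : VF := fun p =>
  nabla X (nabla Y Z) p - nabla Y (nabla X Z) p - nabla (bracket X Y) Z p

/-- The orthonormal frame E₁ = eᵗ∂ₓ, E₂ = eᵗ∂_y, E₃ = e^{-2t}∂_z, E₄ = ∂_t. -/
def EE (i : Fin 4) : VF := fun p j =>
  if i = 0 then (if j = 0 then Real.exp (p 3) else 0)
  else if i = 1 then (if j = 1 then Real.exp (p 3) else 0)
  else if i = 2 then (if j = 2 then Real.exp (-2 * p 3) else 0)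
  else (if j = 3 then 1 else 0)

/-- The curvature tensor evaluated pointwise (via constant extensions). -/
def RiemT (p : Pt) (u v w : Vec) : Vec := Riem (fun _ => u) (fun _ => v) (fun _ => w) p

/-- Normal vector aE₁ + bE₂ + cE₃ + dE₄ at p. -/
def Nvec (p : Pt) (a b c d : ℝ) : Vec :=
  a • EE 0 p + b • EE 1 p + c • EE 2 p + d • EE 3 p

/-!
In the orthonormal frame `E_i` the curvature of Sol⁴₀ has constant components: it is diagonal
on the planes `E_i ∧ E_j`, with sectional curvatures `sectCurv i j`. Writing
`N = aE₁ + bE₂ + cE₃ + dE₄`, the frame vectors with components `(b, -a, d, -c)`,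
`(c, -d, -a, b)`, `(d, c, -b, -a)` (the quaternion units applied to `(a, b, c, d)`) are
tangent, and for them the Codazzi condition reads `6 (a² + b²)(c² + d²) = 0`.
-/

theorem exp_neg_two_mul (t : ℝ) : Real.exp (-2 * t) = (Real.exp t ^ 2)⁻¹ := by
  rw [neg_mul, Real.exp_neg, ← Real.exp_nat_mul]; norm_num

theorem exp_four_mul (t : ℝ) : Real.exp (4 * t) = Real.exp t ^ 4 := by
  rw [← Real.exp_nat_mul]; norm_num

theorem hasFDerivAt_exp_mul_coord_three (c : ℝ) (p : Pt) :
    HasFDerivAt (fun q : Pt => Real.exp (c * q 3))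
      ((c * Real.exp (c * p 3)) •
        ContinuousLinearMap.proj (R := ℝ) (φ := fun _ : Fin 4 => ℝ) 3) p := by
  have h := (((ContinuousLinearMap.proj (R := ℝ) (φ := fun _ : Fin 4 => ℝ) 3).hasFDerivAt
    (x := p)).const_mul c).exp
  rwa [smul_smul, mul_comm] at h

def christoffelForm (p : Pt) (u v : Vec) : Vec := fun k => ∑ i, ∑ j, Chr k i j p * u i * v j

theorem nabla_const_const (u v : Vec) :
    nabla (fun _ => u) (fun _ => v) = fun q => christoffelForm q u v := by
  funext q k
  simp [nabla, christoffelForm]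

theorem bracket_const_const (u v : Vec) : bracket (fun _ => u) (fun _ => v) = 0 := by
  funext q k
  simp [bracket]

theorem RiemT_eq_christoffelForm (p : Pt) (u v w : Vec) :
    RiemT p u v w = fun k =>
      fderiv ℝ (fun q => christoffelForm q v w k) p u
        - fderiv ℝ (fun q => christoffelForm q u w k) p v
        + christoffelForm p u (christoffelForm p v w) k
        - christoffelForm p v (christoffelForm p u w) k := by
  funext k
  simp only [RiemT, Riem, nabla_const_const, bracket_const_const]
  simp only [Pi.sub_apply, nabla, christoffelForm, fderiv_fun_const, Pi.zero_apply,
    zero_apply, mul_zero, zero_mul, Finset.sum_const_zero]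
  ring

def solWeight : Fin 4 → ℝ := ![-2, -2, 4, 0]

theorem Gc_eq_exp (i : Fin 4) : Gc i = fun q => Real.exp (solWeight i * q 3) := by
  funext q
  fin_cases i <;> simp [Gc, solWeight]

theorem pd_Gc (j i : Fin 4) (p : Pt) :
    pd j (Gc i) p = if j = 3 then solWeight i * Gc i p else 0 := by
  rw [Gc_eq_exp, pd, (hasFDerivAt_exp_mul_coord_three _ p).fderiv]
  by_cases hj : j = 3
  · simp [hj, cvec]
  · simp [hj, cvec, Ne.symm hj]

theorem christoffelForm_eq (p : Pt) (u v : Vec) :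
    christoffelForm p u v =
      ![-(u 0 * v 3 + u 3 * v 0), -(u 1 * v 3 + u 3 * v 1), 2 * (u 2 * v 3 + u 3 * v 2),
        Real.exp (-2 * p 3) * (u 0 * v 0 + u 1 * v 1) - 2 * Real.exp (4 * p 3) * (u 2 * v 2)] := by
  funext k
  fin_cases k <;>
    simp [christoffelForm, Fin.sum_univ_four, Chr, pd_Gc, solWeight, Gc] <;>
    field_simp <;> ring

theorem fderiv_christoffelForm (p : Pt) (u v w : Vec) (k : Fin 4) :
    fderiv ℝ (fun q => christoffelForm q v w k) p u =
      if k = 3 then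
        u 3 * (-2 * Real.exp (-2 * p 3) * (v 0 * w 0 + v 1 * w 1)
          - 8 * Real.exp (4 * p 3) * (v 2 * w 2))
      else 0 := by
  simp only [christoffelForm_eq]
  fin_cases k
  · simp
  · simp
  · simp
  · have h := ((hasFDerivAt_exp_mul_coord_three (-2) p).mul_const (v 0 * w 0 + v 1 * w 1)).fun_sub
      (((hasFDerivAt_exp_mul_coord_three 4 p).const_mul 2).mul_const (v 2 * w 2))
    simp only [Fin.reduceFinMk, Fin.isValue, Matrix.cons_val_three, Matrix.tail_cons,
      Matrix.head_cons, if_true]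
    rw [h.fderiv]
    simp only [sub_apply, smul_apply, ContinuousLinearMap.proj_apply, smul_eq_mul]
    ring

def frameVec (p : Pt) (x : Vec) : Vec := ∑ i, x i • EE i p

theorem frameVec_eq (p : Pt) (x : Vec) :
    frameVec p x =
      ![Real.exp (p 3) * x 0, Real.exp (p 3) * x 1, Real.exp (-2 * p 3) * x 2, x 3] := by
  funext k
  fin_cases k <;> simp [frameVec, EE, Fin.sum_univ_four] <;> ring

theorem Nvec_eq_frameVec (p : Pt) (a b c d : ℝ) : Nvec p a b c d = frameVec p ![a, b, c, d] := by
  simp [Nvec, frameVec, Fin.sum_univ_four]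

theorem gSol_frameVec (p : Pt) (x y : Vec) : gSol p (frameVec p x) (frameVec p y) = x ⬝ᵥ y := by
  have := Real.exp_ne_zero (p 3)
  simp only [gSol, Gc_eq_exp, frameVec_eq, dotProduct, Fin.sum_univ_four, solWeight]
  simp only [Fin.isValue, Matrix.cons_val_zero, Matrix.cons_val_one, Matrix.cons_val_two,
    Matrix.cons_val_three, Matrix.head_cons, Matrix.tail_cons, zero_mul, Real.exp_zero,
    exp_neg_two_mul, exp_four_mul]
  field_simp

/-- `R(X, Y)Z = ∑ K i j * X i * Y j * (Z j • E i - Z i • E j)` in frame components, with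
`K = sectCurv`. -/
def sectCurv : Matrix (Fin 4) (Fin 4) ℝ :=
  !![0, -1, 2, -1; -1, 0, 2, -1; 2, 2, 0, -4; -1, -1, -4, 0]

def solCurv (x y z : Vec) : Vec := fun m => ∑ j, sectCurv m j * (x m * y j - x j * y m) * z j

theorem RiemT_frameVec (p : Pt) (x y z : Vec) :
    RiemT p (frameVec p x) (frameVec p y) (frameVec p z) = frameVec p (solCurv x y z) := by
  have := Real.exp_ne_zero (p 3)
  funext k
  rw [RiemT_eq_christoffelForm]
  simp only [fderiv_christoffelForm]
  simp only [christoffelForm_eq, frameVec_eq, exp_neg_two_mul, exp_four_mul]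
  fin_cases k <;> simp [solCurv, sectCurv, Fin.sum_univ_four] <;> field_simp <;> ring

theorem sol40_codazzi_normal_general (p : Pt) (a b c d : ℝ)
    (hcod : ∀ u v w : Vec,
      gSol p u (Nvec p a b c d) = 0 → gSol p v (Nvec p a b c d) = 0 →
      gSol p w (Nvec p a b c d) = 0 →
      gSol p (RiemT p u v w) (Nvec p a b c d) = 0) :
    (a ^ 2 + b ^ 2) * (c ^ 2 + d ^ 2) = 0 := by
  rw [Nvec_eq_frameVec] at hcod
  have hcurv := hcod (frameVec p ![c, -d, -a, b]) (frameVec p ![d, c, -b, -a])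
    (frameVec p ![b, -a, d, -c])
  simp only [gSol_frameVec, RiemT_frameVec, Matrix.cons_dotProduct_cons,
    Matrix.dotProduct_of_isEmpty] at hcurv
  replace hcurv := hcurv (by ring) (by ring) (by ring)
  have hvalue : solCurv ![c, -d, -a, b] ![d, c, -b, -a] ![b, -a, d, -c] ⬝ᵥ ![a, b, c, d] =
      6 * ((a ^ 2 + b ^ 2) * (c ^ 2 + d ^ 2)) := by
    simp only [dotProduct, solCurv, sectCurv, Matrix.of_apply, Matrix.cons_val',
      Matrix.cons_val_fin_one, Fin.sum_univ_four, Matrix.cons_val_zero, Matrix.cons_val_one,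
      Matrix.cons_val]
    ring
  linarith

/-- If the unit normal N = aE₁+bE₂+cE₃+dE₄ of a hypersurface of Sol⁴₀ satisfies the Codazzi
condition g(R̃(X,Y)Z, N) = 0 for all tangent X,Y,Z, then (a²+b²)(c²+d²) = 0, i.e. N lies
entirely in span{E₁,E₂} or entirely in span{E₃,E₄}. -/
theorem sol40_codazzi_normal (p : Pt) (a b c d : ℝ)
    (hunit : a ^ 2 + b ^ 2 + c ^ 2 + d ^ 2 = 1)
    (hcod : ∀ u v w : Vec,
      gSol p u (Nvec p a b c d) = 0 → gSol p v (Nvec p a b c d) = 0 →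
      gSol p w (Nvec p a b c d) = 0 →
      gSol p (RiemT p u v w) (Nvec p a b c d) = 0) :
    (a ^ 2 + b ^ 2) * (c ^ 2 + d ^ 2) = 0 :=
  sol40_codazzi_normal_general p a b c d hcod
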